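/- Let $\mathcal{S}_1, \mathcal{S}_2, \dots, \mathcal{S}_m$ be partitions of a finite set $V$ such that each $\mathcal{S}_{i+1}$ refines $\mathcal{S}_i$. Then there exist edge sets $E_1, \dots, E_m$ on $V$ such that $|E_1| = |\mathcal{S}_1| - 1$, $|E_i| = |\mathcal{S}_i| - |\mathcal{S}_{i-1}|$ for $i > 1$, and for each $i$, the graph on $V$ whose connected-component partition refines $\mathcal{S}_i$ becomes connected after adding $E_1 \cup \dots \cup E_i$; in particular $|E_1 \cup \dots \cup E_i| = |\mathcal{S}_i| - 1$. -/

import Mathlib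

/-- The graph on `V` in which two distinct vertices are adjacent iff they lie in a common
block of the partition `P`; its connected components are exactly the blocks of `P`. -/
def blockGraph {V : Type*} (P : Finset (Finset V)) : SimpleGraph V :=
  SimpleGraph.fromRel (fun u v => ∃ B ∈ P, u ∈ B ∧ v ∈ B)

/-!
Fix a well-order on `V` and represent every block by its least element. Along a refining chain
the set of representatives only grows, since the least element of a block `C` is also the least
element of the finer block containing it. At step `i` connect each new representative `v` to the
representative of the block of `S_{i-1}` containing `v` (for `i = 1`, to the least element of
`V`). Each such edge has exactly one endpoint that is a representative of `S_{i-1}`, so by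
induction the edges chosen up to step `i` form a spanning tree on the `|S_i|` representatives of
`S_i`, and every vertex lies in the block of its representative.
-/

open Finset SimpleGraph

namespace PartitionChain

variable {V : Type*}

structure IsPartition (P : Finset (Finset V)) : Prop where
  nonempty : ∀ B ∈ P, B.Nonempty
  existsUnique : ∀ v, ∃! B, B ∈ P ∧ v ∈ B

def Refines (Q P : Finset (Finset V)) : Prop :=
  ∀ B ∈ Q, ∃ C ∈ P, B ⊆ C

structure IsCoherentChoice (r : Finset V → V) : Prop where
  mem : ∀ {B : Finset V}, B.Nonempty → r B ∈ B
  eq_of_subset : ∀ {B C : Finset V}, B ⊆ C → r C ∈ B → r B = r C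

theorem exists_isCoherentChoice [Nonempty V] : ∃ r : Finset V → V, IsCoherentChoice r := by
  classical
  let _ : LinearOrder V := WellOrderingRel.isWellOrder.linearOrder
  refine ⟨fun B => if h : B.Nonempty then B.min' h else Classical.arbitrary V, ⟨?_, ?_⟩⟩
  · intro B hB
    simpa only [dif_pos hB] using B.min'_mem hB
  · intro B C hBC hC
    have hCne : C.Nonempty := ⟨_, hBC hC⟩
    have hBne : B.Nonempty := ⟨_, hC⟩
    simp only [dif_pos hCne, dif_pos hBne] at hC ⊢
    exact le_antisymm (B.min'_le _ hC) (C.min'_le _ (hBC (B.min'_mem hBne)))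

variable {r : Finset V → V} {P Q : Finset (Finset V)}

theorem IsPartition.eq_of_mem (hP : IsPartition P) {B C : Finset V} (hB : B ∈ P) (hC : C ∈ P)
    {v : V} (hvB : v ∈ B) (hvC : v ∈ C) : B = C :=
  (hP.existsUnique v).unique ⟨hB, hvB⟩ ⟨hC, hvC⟩

theorem IsPartition.card_image [DecidableEq V] (hr : IsCoherentChoice r) (hP : IsPartition P) :
    (P.image r).card = P.card :=
  card_image_of_injOn fun B hB C hC hBC =>
    hP.eq_of_mem hB hC (hr.mem (hP.nonempty B hB)) (by rw [hBC]; exact hr.mem (hP.nonempty C hC))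

theorem image_subset_image_of_refines [DecidableEq V] (hr : IsCoherentChoice r)
    (hP : IsPartition P) (hQ : IsPartition Q) (hQP : Refines Q P) : P.image r ⊆ Q.image r := by
  intro v hv
  obtain ⟨C, hC, rfl⟩ := mem_image.mp hv
  have hrC : r C ∈ C := hr.mem (hP.nonempty C hC)
  obtain ⟨B, ⟨hB, hrB⟩, -⟩ := hQ.existsUnique (r C)
  obtain ⟨C', hC', hBC'⟩ := hQP B hB
  have hC'C : C' = C := hP.eq_of_mem hC' hC (hBC' hrB) hrC
  exact mem_image.mpr ⟨B, hB, hr.eq_of_subset (hC'C ▸ hBC') hrB⟩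

theorem blockGraph_reachable {B : Finset V} (hB : B ∈ P) {u v : V} (hu : u ∈ B) (hv : v ∈ B) :
    (blockGraph P).Reachable u v := by
  by_cases huv : u = v
  · exact huv ▸ Reachable.refl u
  · exact Adj.reachable ((fromRel_adj _ u v).mpr ⟨huv, Or.inl ⟨B, hB, hu, hv⟩⟩)

section Blocks

variable [DecidableEq V]

def blockOf (P : Finset (Finset V)) (v : V) : Finset V :=
  (P.filter (v ∈ ·)).biUnion id

theorem IsPartition.blockOf_eq (hP : IsPartition P) {B : Finset V} (hB : B ∈ P) {v : V}
    (hv : v ∈ B) : blockOf P v = B := by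
  ext w
  simp only [blockOf, mem_biUnion, mem_filter, id]
  constructor
  · rintro ⟨C, ⟨hC, hvC⟩, hwC⟩
    exact hP.eq_of_mem hC hB hvC hv ▸ hwC
  · exact fun hw => ⟨B, ⟨hB, hv⟩, hw⟩

theorem IsPartition.blockOf_mem (hP : IsPartition P) (v : V) : blockOf P v ∈ P := by
  obtain ⟨B, ⟨hB, hv⟩, -⟩ := hP.existsUnique v
  exact hP.blockOf_eq hB hv ▸ hB

theorem IsPartition.mem_blockOf (hP : IsPartition P) (v : V) : v ∈ blockOf P v := by
  obtain ⟨B, ⟨hB, hv⟩, -⟩ := hP.existsUnique v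
  exact hP.blockOf_eq hB hv ▸ hv

def newEdges (r : Finset V → V) (P Q : Finset (Finset V)) : Finset (Sym2 V) :=
  (Q.image r \ P.image r).image fun v => s(v, r (blockOf P v))

theorem card_newEdges (hr : IsCoherentChoice r) (hP : IsPartition P) (hQ : IsPartition Q)
    (hQP : Refines Q P) : (newEdges r P Q).card = Q.card - P.card := by
  have hinj : Set.InjOn (fun v => s(v, r (blockOf P v))) ↑(Q.image r \ P.image r) := by
    intro a ha b hb hab
    rcases Sym2.eq_iff.mp hab with ⟨h, -⟩ | ⟨h, -⟩
    · exact h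
    · exact absurd (h ▸ mem_image_of_mem r (hP.blockOf_mem b)) (mem_sdiff.mp ha).2
  rw [newEdges, card_image_of_injOn hinj,
    card_sdiff_of_subset (image_subset_image_of_refines hr hP hQ hQP),
    hP.card_image hr, hQ.card_image hr]

theorem mem_image_of_mem_newEdges (hr : IsCoherentChoice r) (hP : IsPartition P)
    (hQ : IsPartition Q) (hQP : Refines Q P) {e : Sym2 V} (he : e ∈ newEdges r P Q) {x : V}
    (hx : x ∈ e) : x ∈ Q.image r := by
  obtain ⟨v, hv, rfl⟩ := mem_image.mp he
  rcases Sym2.mem_iff.mp hx with rfl | rfl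
  · exact (mem_sdiff.mp hv).1
  · exact image_subset_image_of_refines hr hP hQ hQP (mem_image_of_mem r (hP.blockOf_mem v))

/-- A connected graph on `R` with `|R| - 1` edges, i.e. a spanning tree of `R`. -/
structure IsSpanningTreeOn (U : Finset (Sym2 V)) (R : Finset V) : Prop where
  mem : ∀ e ∈ U, ∀ x ∈ e, x ∈ R
  card_add_one : U.card + 1 = R.card
  reachable : ∀ x ∈ R, ∀ y ∈ R, (fromEdgeSet (U : Set (Sym2 V))).Reachable x y

theorem IsSpanningTreeOn.union_newEdges {U : Finset (Sym2 V)} (hr : IsCoherentChoice r)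
    (hP : IsPartition P) (hQ : IsPartition Q) (hQP : Refines Q P)
    (hU : IsSpanningTreeOn U (P.image r)) :
    IsSpanningTreeOn (U ∪ newEdges r P Q) (Q.image r) := by
  have hPQ := image_subset_image_of_refines hr hP hQ hQP
  have hdisj : Disjoint U (newEdges r P Q) := by
    refine disjoint_left.mpr fun e heU heN => ?_
    obtain ⟨v, hv, rfl⟩ := mem_image.mp heN
    exact (mem_sdiff.mp hv).2 (hU.mem _ heU v (Sym2.mem_mk_left _ _))
  let G := fromEdgeSet ((U ∪ newEdges r P Q : Finset (Sym2 V)) : Set (Sym2 V))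
  have hmono : fromEdgeSet (U : Set (Sym2 V)) ≤ G :=
    fromEdgeSet_mono (coe_subset.mpr subset_union_left)
  have hdescend : ∀ x ∈ Q.image r, ∃ x' ∈ P.image r, G.Reachable x x' := by
    intro x hx
    by_cases hxP : x ∈ P.image r
    · exact ⟨x, hxP, Reachable.refl x⟩
    have hpar : r (blockOf P x) ∈ P.image r := mem_image_of_mem r (hP.blockOf_mem x)
    have hedge : s(x, r (blockOf P x)) ∈ U ∪ newEdges r P Q :=
      mem_union_right _ (mem_image_of_mem _ (mem_sdiff.mpr ⟨hx, hxP⟩))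
    refine ⟨_, hpar, Adj.reachable ?_⟩
    exact (fromEdgeSet_adj _).mpr ⟨mem_coe.mpr hedge, fun h => hxP (h ▸ hpar)⟩
  refine ⟨fun e he x hx => ?_, ?_, fun x hx y hy => ?_⟩
  · rcases mem_union.mp he with heU | heN
    · exact hPQ (hU.mem e heU x hx)
    · exact mem_image_of_mem_newEdges hr hP hQ hQP heN hx
  · have hcard := card_le_card hPQ
    rw [card_union_of_disjoint hdisj, card_newEdges hr hP hQ hQP, ← hP.card_image hr,
      ← hQ.card_image hr]
    have := hU.card_add_one
    omega
  · obtain ⟨x', hx', hxx'⟩ := hdescend x hx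
    obtain ⟨y', hy', hyy'⟩ := hdescend y hy
    exact hxx'.trans (((hU.reachable x' hx' y' hy').mono hmono).trans hyy'.symm)

theorem isSpanningTreeOn_biUnion_newEdges (hr : IsCoherentChoice r) (c : ℕ → Finset (Finset V))
    (N : ℕ) (hc0 : (c 0).card = 1) (hpart : ∀ j ≤ N, IsPartition (c j))
    (href : ∀ j < N, Refines (c (j + 1)) (c j)) :
    IsSpanningTreeOn ((range N).biUnion fun j => newEdges r (c j) (c (j + 1)))
      ((c N).image r) := by
  induction N with
  | zero =>
    refine ⟨by simp, by rw [(hpart 0 le_rfl).card_image hr, hc0]; rfl, fun x hx y hy => ?_⟩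
    have hle : ((c 0).image r).card ≤ 1 := by rw [(hpart 0 le_rfl).card_image hr, hc0]
    exact card_le_one.mp hle x hx y hy ▸ Reachable.refl x
  | succ N ih =>
    rw [range_add_one, biUnion_insert, union_comm]
    exact (ih (fun j hj => hpart j (by omega)) (fun j hj => href j (by omega))).union_newEdges hr
      (hpart N (by omega)) (hpart (N + 1) le_rfl) (href N (by omega))

theorem IsSpanningTreeOn.connected_blockGraph_sup [Nonempty V] {U : Finset (Sym2 V)}
    (hr : IsCoherentChoice r) (hP : IsPartition P) (hU : IsSpanningTreeOn U (P.image r)) :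
    (blockGraph P ⊔ fromEdgeSet (U : Set (Sym2 V))).Connected := by
  let G := blockGraph P ⊔ fromEdgeSet (U : Set (Sym2 V))
  have hrep : ∀ v, G.Reachable v (r (blockOf P v)) := fun v =>
    (blockGraph_reachable (hP.blockOf_mem v) (hP.mem_blockOf v)
      (hr.mem (hP.nonempty _ (hP.blockOf_mem v)))).mono le_sup_left
  have hrep_mem : ∀ w, r (blockOf P w) ∈ P.image r :=
    fun w => mem_image_of_mem r (hP.blockOf_mem w)
  refine (connected_iff _).mpr ⟨fun u v => ?_, inferInstance⟩
  exact (hrep u).trans (((hU.reachable _ (hrep_mem u) _ (hrep_mem v)).mono le_sup_right).trans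
    (hrep v).symm)

end Blocks

def consUniv [Fintype V] {m : ℕ} (S : Fin m → Finset (Finset V)) : ℕ → Finset (Finset V)
  | 0 => {univ}
  | j + 1 => if h : j < m then S ⟨j, h⟩ else ∅

variable [Fintype V] {m : ℕ} {S : Fin m → Finset (Finset V)}

theorem consUniv_succ {j : ℕ} (hj : j < m) : consUniv S (j + 1) = S ⟨j, hj⟩ := dif_pos hj

theorem isPartition_consUniv [Nonempty V] (hne : ∀ i, ∀ B ∈ S i, B.Nonempty)
    (hpart : ∀ i, ∀ v : V, ∃! B, B ∈ S i ∧ v ∈ B) :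
    ∀ j ≤ m, IsPartition (consUniv S j)
  | 0, _ => ⟨by simp [consUniv], fun v => ⟨(univ : Finset V), by simp [consUniv]⟩⟩
  | j + 1, hj => by
    rw [consUniv_succ hj]
    exact ⟨hne ⟨j, hj⟩, hpart ⟨j, hj⟩⟩

theorem refines_consUniv
    (href : ∀ (i : Fin m) (h : (i : ℕ) + 1 < m),
      ∀ B ∈ S ⟨(i : ℕ) + 1, h⟩, ∃ C ∈ S i, B ⊆ C) :
    ∀ j < m, Refines (consUniv S (j + 1)) (consUniv S j)
  | 0, _ => fun B _ => ⟨univ, mem_singleton_self _, subset_univ B⟩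
  | j + 1, hj => by
    rw [consUniv_succ hj, consUniv_succ (by omega : j < m)]
    exact href ⟨j, by omega⟩ hj

end PartitionChain

theorem Fin.biUnion_filter_le_eq_biUnion_range {β : Type*} [DecidableEq β] {m : ℕ}
    (f : ℕ → Finset β) (i : Fin m) :
    (Finset.univ.filter (· ≤ i)).biUnion (fun j : Fin m => f j) =
      (Finset.range (i + 1)).biUnion f := by
  ext x
  simp only [Finset.mem_biUnion, Finset.mem_filter, Finset.mem_univ, true_and, Finset.mem_range]
  constructor
  · rintro ⟨j, hj, hx⟩
    exact ⟨j, Nat.lt_succ_of_le hj, hx⟩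
  · rintro ⟨j, hj, hx⟩
    exact ⟨⟨j, by omega⟩, Fin.mk_le_mk.mpr (by omega), hx⟩

open PartitionChain in
/-- Given a chain `S 1, …, S m` of partitions of a finite set `V`, each
refining the previous one, there exist edge sets `E 1, …, E m` with `|E 1| = |S 1| - 1`,
`|E (i+1)| = |S (i+1)| - |S i|`, such that for each `i`, the graph whose connected
components are the blocks of `S i` becomes connected after adding `E 1 ∪ … ∪ E i`; in
particular `|E 1 ∪ … ∪ E i| = |S i| - 1`. -/
theorem stmt15 {V : Type*} [Fintype V] [DecidableEq V] [Nonempty V]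
    (m : ℕ) (hm : 0 < m) (S : Fin m → Finset (Finset V))
    (hne : ∀ i, ∀ B ∈ S i, B.Nonempty)
    (hpart : ∀ i, ∀ v : V, ∃! B, B ∈ S i ∧ v ∈ B)
    (href : ∀ (i : Fin m) (h : (i : ℕ) + 1 < m),
      ∀ B ∈ S ⟨(i : ℕ) + 1, h⟩, ∃ C ∈ S i, B ⊆ C) :
    ∃ E : Fin m → Finset (Sym2 V),
      (E ⟨0, hm⟩).card = (S ⟨0, hm⟩).card - 1 ∧
      (∀ (i : Fin m) (h : (i : ℕ) + 1 < m),
        (E ⟨(i : ℕ) + 1, h⟩).card = (S ⟨(i : ℕ) + 1, h⟩).card - (S i).card) ∧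
      (∀ i : Fin m,
        ((Finset.univ.filter (· ≤ i)).biUnion E).card = (S i).card - 1 ∧
        (blockGraph (S i) ⊔
          SimpleGraph.fromEdgeSet
            (((Finset.univ.filter (· ≤ i)).biUnion E : Finset (Sym2 V)) : Set (Sym2 V))).Connected) := by
  obtain ⟨r, hr⟩ := exists_isCoherentChoice (V := V)
  have hc := isPartition_consUniv hne hpart
  have hcref := refines_consUniv href
  have hcard : ∀ j < m, (newEdges r (consUniv S j) (consUniv S (j + 1))).card =
      (consUniv S (j + 1)).card - (consUniv S j).card := fun j hj =>
    card_newEdges hr (hc j hj.le) (hc (j + 1) hj) (hcref j hj)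
  refine ⟨fun i => newEdges r (consUniv S i) (consUniv S (i + 1)), ?_, fun i h => ?_,
    fun i => ?_⟩
  · rw [hcard 0 hm, consUniv_succ hm]
    rfl
  · rw [hcard (i + 1) h, consUniv_succ h, consUniv_succ i.isLt]
  · have hT := isSpanningTreeOn_biUnion_newEdges hr (consUniv S) (i + 1) (card_singleton _)
      (fun j hj => hc j (by omega)) (fun j hj => hcref j (by omega))
    rw [consUniv_succ i.isLt] at hT
    rw [Fin.biUnion_filter_le_eq_biUnion_range
      fun j => newEdges r (consUniv S j) (consUniv S (j + 1))]
    refine ⟨?_, hT.connected_blockGraph_sup hr ⟨hne i, hpart i⟩⟩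
    have := hT.card_add_one
    rw [IsPartition.card_image hr ⟨hne i, hpart i⟩] at this
    omega
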